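/- arXiv:2306.08324 — 2 statements merged into one kernel-verified Lean document; each statement's English description precedes it below -/
import Mathlib

section
/- Let H ∈ (1/2, 1) and t > 0. Then ∫∫_{ℝ²} |yz|^{H−3/2} · 1_{(−∞,−3t]}(y) · 1_{[−t,t]}(y+z) dy dz ≤ (1/(1−H)) · t^{2H−1}. -/
open MeasureTheory Real Set ENNReal

/-! On the region we have `z ≥ -t - y ≥ 2t` and `|y| ≥ -t - y`, so, the exponent `H - 3/2` being
negative, the integrand is at most `(-t - y) ^ (2H - 3)`, which does not depend on `z`. The
`z`-integral then contributes the length `2t` of the slab, the `y`-integral is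
`(2t) ^ (2H - 2) / (2 - 2H)`, and `(2t) ^ (2H - 1) ≤ 2 t ^ (2H - 1)` because `2H - 1 ≤ 1`. -/

theorem rpow_mul_rpow_le_rpow_two_mul {a s u v : ℝ} (ha : a ≤ 0) (hs : 0 < s) (hu : s ≤ u)
    (hv : s ≤ v) : u ^ a * v ^ a ≤ s ^ (2 * a) := by
  rw [two_mul, rpow_add hs]
  exact mul_le_mul (rpow_le_rpow_of_nonpos hs hu ha) (rpow_le_rpow_of_nonpos hs hv ha)
    (rpow_nonneg (hs.le.trans hv) _) (rpow_nonneg hs.le _)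

theorem two_mul_rpow_le {p t : ℝ} (hp : p ≤ 1) (ht : 0 ≤ t) : (2 * t) ^ p ≤ 2 * t ^ p := by
  rw [mul_rpow zero_le_two ht]
  gcongr
  simpa using Real.rpow_le_rpow_of_exponent_le one_le_two hp

theorem lintegral_indicator_fst_mem_add_mem {G : Type*} [MeasurableSpace G] [AddGroup G]
    [MeasurableAdd₂ G] (μ : Measure G) [SFinite μ] [μ.IsAddLeftInvariant] {A B : Set G}
    (hA : MeasurableSet A) (hB : MeasurableSet B) {f : G → ℝ≥0∞} (hf : Measurable f) :
    ∫⁻ p, {p : G × G | p.1 ∈ A ∧ p.1 + p.2 ∈ B}.indicator (fun p => f p.1) p ∂(μ.prod μ)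
      = (∫⁻ y in A, f y ∂μ) * μ B := by
  have hS : MeasurableSet {p : G × G | p.1 ∈ A ∧ p.1 + p.2 ∈ B} :=
    (measurable_fst hA).inter (measurable_add hB)
  have hF : Measurable ({p : G × G | p.1 ∈ A ∧ p.1 + p.2 ∈ B}.indicator fun p => f p.1) :=
    (hf.comp measurable_fst).indicator hS
  rw [lintegral_prod _ hF.aemeasurable,
    ← lintegral_indicator hA, ← lintegral_mul_const _ (hf.indicator hA)]
  refine lintegral_congr fun y => ?_
  by_cases hy : y ∈ A
  · have hfiber : ∀ z, {p : G × G | p.1 ∈ A ∧ p.1 + p.2 ∈ B}.indicator (fun p => f p.1) (y, z)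
        = ((y + ·) ⁻¹' B).indicator (fun _ => f y) z := fun z => by
      by_cases hz : y + z ∈ B <;> simp [indicator, hy, hz]
    simp only [hfiber, lintegral_indicator_const (measurable_const_add y hB), measure_preimage_add,
      indicator_of_mem hy]
  · simp [indicator, hy]

theorem setLIntegral_Iic_comp_sub_left {f : ℝ → ℝ≥0∞} (hf : Measurable f) (a b : ℝ) :
    ∫⁻ y in Iic b, f (a - y) = ∫⁻ x in Ici (a - b), f x := by
  have hpre : (fun y => a - y) ⁻¹' Ici (a - b) = Iic b := by ext; simp
  rw [← hpre, (Measure.measurePreserving_sub_left volume a).setLIntegral_comp_preimage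
    measurableSet_Ici hf]

theorem lintegral_Ici_ofReal_rpow_of_lt {s c : ℝ} (hs : s < -1) (hc : 0 < c) :
    ∫⁻ x in Ici c, ENNReal.ofReal (x ^ s) = ENNReal.ofReal (-c ^ (s + 1) / (s + 1)) := by
  rw [← setLIntegral_congr (Ioi_ae_eq_Ici (μ := (volume : Measure ℝ)) (a := c)),
    ← integral_Ioi_rpow_of_lt hs hc,
    ofReal_integral_eq_lintegral_ofReal (integrableOn_Ioi_rpow_of_lt hs hc)]
  filter_upwards [ae_restrict_mem measurableSet_Ioi] with x hx
  exact rpow_nonneg (hc.trans hx).le s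

/-- estimate of the singular double integral over the region
{y ≤ -3t, -t ≤ y+z ≤ t}. -/
theorem stmt_5 (H t : ℝ) (hH : H ∈ Set.Ioo (1/2 : ℝ) 1) (ht : 0 < t) :
    (∫⁻ p : ℝ × ℝ,
        Set.indicator {p : ℝ × ℝ | p.1 ≤ -(3*t) ∧ p.1 + p.2 ∈ Set.Icc (-t) t}
          (fun p => ENNReal.ofReal (|p.1 * p.2| ^ (H - 3/2))) p)
      ≤ ENNReal.ofReal (1 / (1 - H) * t ^ (2*H - 1)) := by
  have hH1 : H < 1 := hH.2
  calc _ ≤ ∫⁻ p : ℝ × ℝ, {p : ℝ × ℝ | p.1 ∈ Iic (-(3*t)) ∧ p.1 + p.2 ∈ Icc (-t) t}.indicator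
          (fun p => ENNReal.ofReal ((-t - p.1) ^ (2 * H - 3))) p := by
        refine lintegral_mono fun p => indicator_le_indicator' fun ⟨hy, hz, _⟩ => ?_
        rw [abs_mul, mul_rpow (abs_nonneg _) (abs_nonneg _), show 2 * H - 3 = 2 * (H - 3/2) by ring]
        exact ENNReal.ofReal_le_ofReal <| rpow_mul_rpow_le_rpow_two_mul (by linarith) (by linarith)
          (by rw [abs_of_nonpos (by linarith)]; linarith)
          (by rw [abs_of_pos (by linarith)]; linarith)
    _ = (∫⁻ y in Iic (-(3*t)), ENNReal.ofReal ((-t - y) ^ (2 * H - 3)))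
          * volume (Icc (-t) t) := by
        rw [Measure.volume_eq_prod]
        exact lintegral_indicator_fst_mem_add_mem volume measurableSet_Iic measurableSet_Icc
          (f := fun y => ENNReal.ofReal ((-t - y) ^ (2 * H - 3))) (by fun_prop)
    _ = ENNReal.ofReal ((2 * t) ^ (2 * H - 1) / (2 * (1 - H))) := by
        have h2t : 0 < 2 * t := by linarith
        rw [setLIntegral_Iic_comp_sub_left (f := fun x => ENNReal.ofReal (x ^ (2 * H - 3)))
            (by fun_prop), show -t - -(3 * t) = 2 * t by ring,
          lintegral_Ici_ofReal_rpow_of_lt (by linarith) h2t, Real.volume_Icc,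
          ← ENNReal.ofReal_mul
            (div_nonneg_of_nonpos (neg_nonpos.mpr (by positivity)) (by linarith)),
          show 2 * H - 1 = 2 * H - 3 + 1 + 1 by ring, rpow_add_one h2t.ne' (2 * H - 3 + 1)]
        have hne : 2 * H - 3 + 1 ≠ 0 := by linarith
        have hne' : 1 - H ≠ 0 := by linarith
        congr 1
        field_simp
        ring
    _ ≤ ENNReal.ofReal (2 * t ^ (2 * H - 1) / (2 * (1 - H))) :=
        ENNReal.ofReal_le_ofReal <|
          div_le_div_of_nonneg_right (two_mul_rpow_le (by linarith) ht.le) (by linarith)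
    _ = ENNReal.ofReal (1 / (1 - H) * t ^ (2 * H - 1)) := by
        have hne : 1 - H ≠ 0 := by linarith
        congr 1
        field_simp
end

section
/- Let H ∈ (1/2, 1). Then the function M_t(x) := (C_H)^{−1}·( (t−x)/|t−x|^{3/2−H} + x/|x|^{3/2−H} ) (interpreted as sign(t−x)|t−x|^{H−1/2} + sign(x)|x|^{H−1/2}, up to the constant) is square integrable on ℝ for every t ∈ ℝ. -/
/-!
Writing `φ(y) = sign y · |y| ^ α` with `α = H - 1/2`, the kernel is `φ(t - x) + φ(x) = φ(x) - φ(x - t)`.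
It is continuous, and for large `x` the mean value theorem bounds it by `α |t| (x / 2) ^ (α - 1)`; since
`φ` is odd, the same holds as `x → -∞` with `t` replaced by `-t`. As `2 (α - 1) < -1`, its square is
integrable at both ends.
-/

open MeasureTheory Real Set Filter Asymptotics

noncomputable def signedRpow (α y : ℝ) : ℝ :=
  Real.sign y * |y| ^ α

section signedRpow

variable {α : ℝ}

lemma signedRpow_neg (y : ℝ) : signedRpow α (-y) = -signedRpow α y := by
  simp [signedRpow, Real.sign_neg]

lemma signedRpow_of_pos {y : ℝ} (hy : 0 < y) : signedRpow α y = y ^ α := by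
  simp [signedRpow, Real.sign_of_pos hy, abs_of_pos hy]

lemma signedRpow_eq_max_rpow_sub (hα : α ≠ 0) (y : ℝ) :
    signedRpow α y = max y 0 ^ α - max (-y) 0 ^ α := by
  rcases lt_trichotomy y 0 with hy | rfl | hy
  · simp [signedRpow, Real.sign_of_neg hy, abs_of_neg hy, hy.le, Real.zero_rpow hα]
  · simp [signedRpow]
  · simp [signedRpow, Real.sign_of_pos hy, abs_of_pos hy, hy.le, Real.zero_rpow hα]

lemma continuous_signedRpow (hα : 0 < α) : Continuous (signedRpow α) := by
  rw [funext (signedRpow_eq_max_rpow_sub hα.ne')]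
  exact ((continuous_id.max continuous_const).rpow_const fun _ => Or.inr hα.le).sub
    ((continuous_neg.max continuous_const).rpow_const fun _ => Or.inr hα.le)

end signedRpow

lemma abs_rpow_sub_rpow_le {α m a b : ℝ} (hα0 : 0 ≤ α) (hα1 : α ≤ 1) (hm : 0 < m)
    (ha : m ≤ a) (hb : m ≤ b) : |a ^ α - b ^ α| ≤ α * m ^ (α - 1) * |a - b| := by
  have hderiv : ∀ y ∈ Ici m, HasDerivWithinAt (· ^ α) (α * y ^ (α - 1)) (Ici m) y :=
    fun y hy => (hasDerivAt_rpow_const (Or.inl (hm.trans_le hy).ne')).hasDerivWithinAt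
  have hbound : ∀ y ∈ Ici m, ‖α * y ^ (α - 1)‖ ≤ α * m ^ (α - 1) := fun y hy => by
    have hy0 : 0 < y := hm.trans_le hy
    rw [Real.norm_eq_abs, abs_of_nonneg (by positivity)]
    exact mul_le_mul_of_nonneg_left (rpow_le_rpow_of_nonpos hm hy (by linarith)) hα0
  simpa [Real.norm_eq_abs] using
    (convex_Ici m).norm_image_sub_le_of_norm_hasDerivWithin_le hderiv hbound hb ha

lemma isBigO_signedRpow_sub_add_signedRpow_atTop {α : ℝ} (hα0 : 0 ≤ α) (hα1 : α ≤ 1) (t : ℝ) :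
    (fun x => signedRpow α (t - x) + signedRpow α x) =O[atTop] fun x => x ^ (α - 1) := by
  refine IsBigO.of_bound (α * 2 ^ (1 - α) * |t|) ?_
  filter_upwards [eventually_gt_atTop 0, eventually_ge_atTop (2 * t)] with x hx hxt
  have hm : 0 < x / 2 := by positivity
  rw [← neg_sub x t, signedRpow_neg, signedRpow_of_pos hx,
    signedRpow_of_pos (by linarith), Real.norm_eq_abs, Real.norm_eq_abs,
    abs_of_pos (by positivity : 0 < x ^ (α - 1))]
  calc |-(x - t) ^ α + x ^ α| = |x ^ α - (x - t) ^ α| := by ring_nf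
    _ ≤ α * (x / 2) ^ (α - 1) * |x - (x - t)| :=
      abs_rpow_sub_rpow_le hα0 hα1 hm (by linarith) (by linarith)
    _ = α * 2 ^ (1 - α) * |t| * x ^ (α - 1) := by
      rw [div_rpow hx.le zero_le_two, ← neg_sub α 1, rpow_neg zero_le_two]
      ring_nf

lemma integrableOn_Ici_sq_of_isBigO_rpow {f : ℝ → ℝ} {β : ℝ} (hβ : β < -1 / 2)
    (hf : Continuous f) (ho : f =O[atTop] fun x => x ^ β) :
    IntegrableOn (fun x => f x ^ 2) (Ici 0) := by
  have hsq : (fun x => f x ^ 2) =O[atTop] fun x => x ^ (β * 2) := by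
    refine (ho.pow 2).congr' EventuallyEq.rfl ?_
    filter_upwards [eventually_ge_atTop 0] with x hx
    exact_mod_cast (rpow_mul_natCast hx β 2).symm
  exact ((hf.pow 2).locallyIntegrable.locallyIntegrableOn _).integrableOn_of_isBigO_atTop hsq
    (integrableAtFilter_rpow_atTop_iff.2 (by linarith))

lemma memLp_two_of_isBigO_rpow {f : ℝ → ℝ} {β : ℝ} (hβ : β < -1 / 2) (hf : Continuous f)
    (hTop : f =O[atTop] fun x => x ^ β) (hBot : (fun x => f (-x)) =O[atTop] fun x => x ^ β) :
    MemLp f 2 volume := by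
  rw [memLp_two_iff_integrable_sq hf.aestronglyMeasurable, ← integrableOn_univ,
    ← Iic_union_Ici (a := 0)]
  refine IntegrableOn.union ?_ (integrableOn_Ici_sq_of_isBigO_rpow hβ hf hTop)
  have hneg : IntegrableOn (fun x => f (-x) ^ 2) (Ici (-0)) := by
    rw [neg_zero]
    exact integrableOn_Ici_sq_of_isBigO_rpow hβ (hf.comp continuous_neg) hBot
  simpa only [neg_neg] using hneg.comp_neg_Iic

theorem stmt_16_general (H C_H : ℝ) (hH : H ∈ Set.Ioo (1/2 : ℝ) 1)
    (t : ℝ) :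
    MemLp (fun x : ℝ =>
        (C_H)⁻¹ * (Real.sign (t - x) * |t - x| ^ (H - 1/2)
          + Real.sign x * |x| ^ (H - 1/2)))
      2 volume := by
  obtain ⟨hH1, hH2⟩ := hH
  have hα0 : 0 < H - 1/2 := by linarith
  have hα1 : H - 1/2 ≤ 1 := by linarith
  have hcont : Continuous fun x => signedRpow (H - 1/2) (t - x) + signedRpow (H - 1/2) x :=
    ((continuous_signedRpow hα0).comp (continuous_sub_left t)).add (continuous_signedRpow hα0)
  have hBot : (fun x => signedRpow (H - 1/2) (t - -x) + signedRpow (H - 1/2) (-x))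
      =O[atTop] fun x => x ^ (H - 1/2 - 1) := by
    have hodd : ∀ x, signedRpow (H - 1/2) (t - -x) + signedRpow (H - 1/2) (-x) =
        -(signedRpow (H - 1/2) (-t - x) + signedRpow (H - 1/2) x) := fun x => by
      rw [show t - -x = -(-t - x) by ring, signedRpow_neg, signedRpow_neg]
      ring
    simpa only [hodd] using (isBigO_signedRpow_sub_add_signedRpow_atTop hα0.le hα1 (-t)).neg_left
  exact (memLp_two_of_isBigO_rpow (by linarith) hcont
    (isBigO_signedRpow_sub_add_signedRpow_atTop hα0.le hα1 t) hBot).const_mul _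

/-- the kernel M_t(x) = (C_H)⁻¹(sign(t−x)|t−x|^(H−1/2)
+ sign(x)|x|^(H−1/2)) is square integrable on ℝ. -/
theorem stmt_16 (H C_H : ℝ) (hH : H ∈ Set.Ioo (1/2 : ℝ) 1) (hC : 0 < C_H)
    (t : ℝ) :
    MemLp (fun x : ℝ =>
        (C_H)⁻¹ * (Real.sign (t - x) * |t - x| ^ (H - 1/2)
          + Real.sign x * |x| ^ (H - 1/2)))
      2 volume :=
  stmt_16_general H C_H hH t
end
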